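/- Let d ≥ 3 and M ≥ 4 be integers. Then the average effective resistance of the d-dimensional toroidal grid with all side lengths equal to M satisfies R_ave(T_{M^d}) ≥ 1/(4d). -/

import Mathlib

open Real Finset

/-!
Every eigenvalue `2d - 2 ∑ cos (2π hᵢ / M)` of the torus Laplacian lies in `(0, 4d]` at a nonzero
frequency, so each nonzero frequency contributes at least `1 / (4d)` to the average. The zero
frequency contributes nothing, but for `M ≥ 4` a unit frequency `eᵢ` contributes
`1 / (2 - 2 cos (2π / M)) ≥ 1 / 2 ≥ 2 / (4d)`, which makes up for it.
-/

/-- Average effective resistance of the `d`-dimensional toroidal grid `T_{M^d}`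
with all side lengths equal to `M`. -/
noncomputable def RaveTorus (d M : ℕ) : ℝ :=
  (1 / (M : ℝ) ^ d) * ∑ h : Fin d → Fin M,
    if ∀ i, (h i : ℕ) = 0 then 0
    else 1 / (2 * d - 2 * ∑ i, Real.cos (2 * Real.pi * (h i : ℕ) / M))

lemma Finset.card_nsmul_le_sum_of_pair {ι β : Type*} [DecidableEq ι] [AddCommMonoid β]
    [PartialOrder β] [IsOrderedAddMonoid β] (s : Finset ι) (f : ι → β) (c : β) {a b : ι}
    (ha : a ∈ s) (hb : b ∈ s) (hab : a ≠ b) (hpair : 2 • c ≤ f a + f b)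
    (hrest : ∀ i ∈ s, i ≠ a → i ≠ b → c ≤ f i) :
    #s • c ≤ ∑ i ∈ s, f i := by
  have hb' : b ∈ s.erase a := mem_erase.2 ⟨hab.symm, hb⟩
  have hcard : #s = #((s.erase a).erase b) + 2 := by
    rw [card_erase_of_mem hb', card_erase_of_mem ha]
    have := one_lt_card.2 ⟨a, ha, b, hb, hab⟩
    omega
  rw [← add_sum_erase s f ha, ← add_sum_erase _ f hb', ← add_assoc, hcard, add_nsmul, add_comm]
  exact add_le_add hpair <| card_nsmul_le_sum _ _ _ fun i hi =>
    hrest i (mem_of_mem_erase (mem_of_mem_erase hi)) (ne_of_mem_erase (mem_of_mem_erase hi))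
      (ne_of_mem_erase hi)

lemma Real.cos_two_pi_mul_div_lt_one {k M : ℕ} (hk : 0 < k) (hkM : k < M) :
    cos (2 * π * k / M) < 1 := by
  have hkM' : (k : ℝ) < M := by exact_mod_cast hkM
  have hk' : (0 : ℝ) < k := by exact_mod_cast hk
  have hpos : 0 < 2 * π * k / M := div_pos (by positivity) (hk'.trans hkM')
  have hlt : 2 * π * k / M < 2 * π := by
    rw [div_lt_iff₀ (hk'.trans hkM')]
    exact mul_lt_mul_of_pos_left hkM' two_pi_pos
  refine (cos_le_one _).lt_of_ne fun h => hpos.ne' ?_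
  exact (cos_eq_one_iff_of_lt_of_lt (by linarith [two_pi_pos]) hlt).1 h

lemma Real.cos_two_pi_div_nonneg {M : ℕ} (hM : 4 ≤ M) : 0 ≤ cos (2 * π / M) := by
  have hM' : (4 : ℝ) ≤ M := by exact_mod_cast hM
  apply cos_nonneg_of_mem_Icc
  constructor
  · linarith [show 0 ≤ 2 * π / M by positivity, pi_pos]
  · rw [div_le_iff₀ (by linarith)]
    nlinarith [pi_pos]

lemma one_half_le_inv_two_sub_two_cos {M : ℕ} (hM : 4 ≤ M) :
    1 / 2 ≤ 1 / (2 - 2 * cos (2 * π / M)) := by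
  have hlt := cos_two_pi_mul_div_lt_one (k := 1) one_pos (by omega : 1 < M)
  rw [Nat.cast_one, mul_one] at hlt
  exact one_div_le_one_div_of_le (by linarith) (by linarith [cos_two_pi_div_nonneg hM])

noncomputable def torusEigenvalue (d M : ℕ) (h : Fin d → Fin M) : ℝ :=
  2 * d - 2 * ∑ i, cos (2 * π * (h i : ℕ) / M)

noncomputable def torusResistanceTerm (d M : ℕ) (h : Fin d → Fin M) : ℝ :=
  if ∀ i, (h i : ℕ) = 0 then 0 else 1 / torusEigenvalue d M h

lemma raveTorus_eq_sum (d M : ℕ) :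
    RaveTorus d M = 1 / (M : ℝ) ^ d * ∑ h, torusResistanceTerm d M h :=
  rfl

section Torus

variable {d M : ℕ}

lemma torusEigenvalue_le (h : Fin d → Fin M) : torusEigenvalue d M h ≤ 4 * d := by
  have : ∑ _i : Fin d, (-1 : ℝ) ≤ ∑ i, cos (2 * π * (h i : ℕ) / M) :=
    sum_le_sum fun i _ => neg_one_le_cos _
  simp only [sum_const, card_univ, Fintype.card_fin, nsmul_eq_mul, mul_neg, mul_one] at this
  unfold torusEigenvalue
  linarith

lemma torusEigenvalue_pos [NeZero M] {h : Fin d → Fin M} (hh : h ≠ 0) :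
    0 < torusEigenvalue d M h := by
  obtain ⟨i, hi⟩ := Function.ne_iff.1 hh
  have : ∑ i, cos (2 * π * (h i : ℕ) / M) < ∑ _i : Fin d, (1 : ℝ) :=
    sum_lt_sum (fun i _ => cos_le_one _) ⟨i, mem_univ _,
      cos_two_pi_mul_div_lt_one (Nat.pos_of_ne_zero (Fin.val_ne_zero_iff.2 hi)) (h i).2⟩
  simp only [sum_const, card_univ, Fintype.card_fin, nsmul_eq_mul, mul_one] at this
  unfold torusEigenvalue
  linarith

lemma torusEigenvalue_pi_single [NeZero M] (i : Fin d) (k : Fin M) :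
    torusEigenvalue d M (Pi.single i k) = 2 - 2 * cos (2 * π * (k : ℕ) / M) := by
  have hterm : ∀ j, cos (2 * π * ((Pi.single i k : Fin d → Fin M) j : ℕ) / M)
      = 1 + (Pi.single i (cos (2 * π * (k : ℕ) / M) - 1) : Fin d → ℝ) j := by
    intro j
    rcases eq_or_ne j i with rfl | hj
    · simp
    · simp [Pi.single_eq_of_ne hj]
  simp only [torusEigenvalue, hterm, sum_add_distrib, sum_const, card_univ, Fintype.card_fin,
    nsmul_eq_mul, mul_one, sum_pi_single', mem_univ, if_true]
  ring

lemma torusResistanceTerm_zero [NeZero M] : torusResistanceTerm d M 0 = 0 :=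
  if_pos fun _ => rfl

lemma torusResistanceTerm_of_ne_zero [NeZero M] {h : Fin d → Fin M} (hh : h ≠ 0) :
    torusResistanceTerm d M h = 1 / torusEigenvalue d M h :=
  if_neg fun hall => hh (funext fun i => Fin.ext (hall i))

lemma inv_four_mul_le_torusResistanceTerm [NeZero M] {h : Fin d → Fin M} (hh : h ≠ 0) :
    1 / (4 * (d : ℝ)) ≤ torusResistanceTerm d M h := by
  rw [torusResistanceTerm_of_ne_zero hh]
  exact one_div_le_one_div_of_le (torusEigenvalue_pos hh) (torusEigenvalue_le h)

lemma one_half_le_torusResistanceTerm_pi_single_one [NeZero M] (hM : 4 ≤ M) (i : Fin d) :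
    1 / 2 ≤ torusResistanceTerm d M (Pi.single i 1) := by
  have hone : ((1 : Fin M) : ℕ) = 1 := by rw [Fin.val_one', Nat.mod_eq_of_lt (by omega)]
  have hne : (Pi.single i 1 : Fin d → Fin M) ≠ 0 :=
    Pi.single_ne_zero_iff.2 (Fin.one_eq_zero_iff.not.2 (by omega))
  rw [torusResistanceTerm_of_ne_zero hne, torusEigenvalue_pi_single, hone, Nat.cast_one, mul_one]
  exact one_half_le_inv_two_sub_two_cos hM

end Torus

theorem torusd_lower (d M : ℕ) (hd : 3 ≤ d) (hM : 4 ≤ M) :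
    RaveTorus d M ≥ 1 / (4 * (d : ℝ)) := by
  have : NeZero M := ⟨by omega⟩
  set c : ℝ := 1 / (4 * (d : ℝ))
  let e : Fin d → Fin M := Pi.single ⟨0, by omega⟩ 1
  have he : e ≠ 0 := Pi.single_ne_zero_iff.2 (Fin.one_eq_zero_iff.not.2 (by omega))
  have hd' : (1 : ℝ) ≤ d := by exact_mod_cast (by omega : 1 ≤ d)
  have hc : c ≤ 1 / 4 := one_div_le_one_div_of_le (by norm_num) (by linarith)
  have hpair : 2 • c ≤ torusResistanceTerm d M 0 + torusResistanceTerm d M e := by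
    rw [torusResistanceTerm_zero, zero_add, two_nsmul]
    linarith [one_half_le_torusResistanceTerm_pi_single_one hM (d := d) ⟨0, by omega⟩]
  have hsum : Fintype.card (Fin d → Fin M) • c ≤ ∑ h, torusResistanceTerm d M h :=
    card_nsmul_le_sum_of_pair univ _ c (mem_univ 0) (mem_univ e) he.symm hpair
      fun h _ h0 _ => inv_four_mul_le_torusResistanceTerm h0
  rw [Fintype.card_fun, Fintype.card_fin, Fintype.card_fin, nsmul_eq_mul, Nat.cast_pow] at hsum
  rw [ge_iff_le, raveTorus_eq_sum, one_div_mul_eq_div, le_div_iff₀ (by positivity)]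
  linarith
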